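/- The function D(U₁, U₂) = √(1 − |Tr(U₁U₂†)|²/d²) on d×d unitaries satisfies the triangle inequality: D(U₁, U₃) ≤ D(U₁, U₂) + D(U₂, U₃). -/

import Mathlib

/-!
Scale the Hilbert–Schmidt inner product so that unitaries become unit vectors, with
`⟪V, U⟫ = Tr (U Vᴴ) / d`. For unit vectors `u, v`, `√(1 - |⟪v, u⟫|²)` is the distance from `u` to
the line `ℂ v`, i.e. `‖Q_v u‖` with `Q_v` the orthogonal projection onto `(ℂ v)ᗮ`. Splitting
`u = Q_v u + ⟪v, u⟫ v` and applying the contraction `Q_w` gives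
`‖Q_w u‖ ≤ ‖Q_v u‖ + |⟪v, u⟫| ‖Q_w v‖ ≤ ‖Q_v u‖ + ‖Q_w v‖`.
-/

open Matrix

/-- Phase-insensitive distance D(U₁,U₂) = √(1 − |Tr(U₁U₂†)|²/d²) on d×d matrices. -/
noncomputable def pDist {d : ℕ} (U₁ U₂ : Matrix (Fin d) (Fin d) ℂ) : ℝ :=
  Real.sqrt (1 - ‖(U₁ * U₂ᴴ).trace‖ ^ 2 / (d : ℝ) ^ 2)

open scoped InnerProductSpace ComplexOrder

section InnerProductSpace

variable {𝕜 E : Type*} [RCLike 𝕜] [NormedAddCommGroup E] [InnerProductSpace 𝕜 E]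

theorem norm_starProjection_orthogonal_singleton_sq {v : E} (hv : ‖v‖ = 1) (u : E) :
    ‖(𝕜 ∙ v)ᗮ.starProjection u‖ ^ 2 = ‖u‖ ^ 2 - ‖⟪v, u⟫_𝕜‖ ^ 2 := by
  rw [Submodule.norm_sq_eq_add_norm_sq_starProjection u (𝕜 ∙ v),
    Submodule.starProjection_unit_singleton 𝕜 hv, norm_smul, hv, mul_one, add_sub_cancel_left]

theorem norm_starProjection_orthogonal_singleton_le_add {v : E} (hv : ‖v‖ = 1) (u w : E) :
    ‖(𝕜 ∙ w)ᗮ.starProjection u‖ ≤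
      ‖(𝕜 ∙ v)ᗮ.starProjection u‖ + ‖u‖ * ‖(𝕜 ∙ w)ᗮ.starProjection v‖ := by
  set Q := (𝕜 ∙ w)ᗮ.starProjection
  have hu : u = (𝕜 ∙ v)ᗮ.starProjection u + ⟪v, u⟫_𝕜 • v := by
    rw [Submodule.starProjection_orthogonal_val, Submodule.starProjection_unit_singleton 𝕜 hv,
      sub_add_cancel]
  have hvu : ‖⟪v, u⟫_𝕜‖ ≤ ‖u‖ := by simpa [hv] using norm_inner_le_norm (𝕜 := 𝕜) v u
  calc ‖Q u‖ = ‖Q ((𝕜 ∙ v)ᗮ.starProjection u) + ⟪v, u⟫_𝕜 • Q v‖ := by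
        rw [← map_smul, ← map_add, ← hu]
    _ ≤ ‖Q ((𝕜 ∙ v)ᗮ.starProjection u)‖ + ‖⟪v, u⟫_𝕜‖ * ‖Q v‖ :=
        (norm_add_le _ _).trans_eq (by rw [norm_smul])
    _ ≤ _ := by gcongr; exact Submodule.norm_starProjection_apply_le _ _

theorem sqrt_one_sub_norm_inner_sq_eq_norm_starProjection {u v : E} (hu : ‖u‖ = 1)
    (hv : ‖v‖ = 1) :
    √(1 - ‖⟪v, u⟫_𝕜‖ ^ 2) = ‖(𝕜 ∙ v)ᗮ.starProjection u‖ := by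
  rw [← Real.sqrt_sq (norm_nonneg ((𝕜 ∙ v)ᗮ.starProjection u)),
    norm_starProjection_orthogonal_singleton_sq hv, hu, one_pow]

theorem sqrt_one_sub_norm_inner_sq_triangle {u v w : E} (hu : ‖u‖ = 1) (hv : ‖v‖ = 1)
    (hw : ‖w‖ = 1) :
    √(1 - ‖⟪w, u⟫_𝕜‖ ^ 2) ≤ √(1 - ‖⟪v, u⟫_𝕜‖ ^ 2) + √(1 - ‖⟪w, v⟫_𝕜‖ ^ 2) := by
  rw [sqrt_one_sub_norm_inner_sq_eq_norm_starProjection hu hv,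
    sqrt_one_sub_norm_inner_sq_eq_norm_starProjection hu hw,
    sqrt_one_sub_norm_inner_sq_eq_norm_starProjection hv hw]
  simpa [hu] using norm_starProjection_orthogonal_singleton_le_add (𝕜 := 𝕜) hv u w

end InnerProductSpace

namespace Matrix

variable {n : Type*} [Fintype n] [DecidableEq n]

theorem posDef_inv_card_smul_one : ((Fintype.card n : ℂ)⁻¹ • (1 : Matrix n n ℂ)).PosDef := by
  rw [smul_one_eq_diagonal, posDef_diagonal_iff]
  intro i
  have : 0 < Fintype.card n := Fintype.card_pos_iff.mpr ⟨i⟩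
  positivity

noncomputable abbrev normalizedHSNormedAddCommGroup : NormedAddCommGroup (Matrix n n ℂ) :=
  toMatrixNormedAddCommGroup _ posDef_inv_card_smul_one

attribute [local instance] normalizedHSNormedAddCommGroup

noncomputable abbrev normalizedHSInnerProductSpace : InnerProductSpace ℂ (Matrix n n ℂ) :=
  toMatrixInnerProductSpace _ posDef_inv_card_smul_one.posSemidef

attribute [local instance] normalizedHSInnerProductSpace

theorem normalizedHS_inner_eq (A B : Matrix n n ℂ) :
    ⟪A, B⟫_ℂ = (B * Aᴴ).trace / Fintype.card n := by
  change (B * _ * Aᴴ).trace = _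
  rw [Matrix.mul_smul, mul_one, Matrix.smul_mul, trace_smul, smul_eq_mul, div_eq_inv_mul]

theorem normalizedHS_norm_eq_one_of_mem_unitaryGroup [Nonempty n] {U : Matrix n n ℂ}
    (hU : U ∈ unitaryGroup n ℂ) : ‖U‖ = 1 := by
  have hUU : U * Uᴴ = 1 := mem_unitaryGroup_iff.mp hU
  have h := norm_sq_eq_re_inner (𝕜 := ℂ) U
  rw [normalizedHS_inner_eq, hUU, trace_one, div_self (by simp), RCLike.one_re] at h
  exact (pow_eq_one_iff_of_nonneg (norm_nonneg U) two_ne_zero).mp h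

theorem sqrt_one_sub_norm_trace_sq_triangle {U₁ U₂ U₃ : Matrix n n ℂ}
    (h₁ : U₁ ∈ unitaryGroup n ℂ) (h₂ : U₂ ∈ unitaryGroup n ℂ) (h₃ : U₃ ∈ unitaryGroup n ℂ) :
    √(1 - ‖(U₁ * U₃ᴴ).trace‖ ^ 2 / (Fintype.card n : ℝ) ^ 2) ≤
      √(1 - ‖(U₁ * U₂ᴴ).trace‖ ^ 2 / (Fintype.card n : ℝ) ^ 2) +
        √(1 - ‖(U₂ * U₃ᴴ).trace‖ ^ 2 / (Fintype.card n : ℝ) ^ 2) := by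
  cases isEmpty_or_nonempty n
  · -- every term is `√(1 - 0 / 0) = 1`
    simp
  · simpa [normalizedHS_inner_eq, div_pow] using
      sqrt_one_sub_norm_inner_sq_triangle (𝕜 := ℂ)
        (normalizedHS_norm_eq_one_of_mem_unitaryGroup h₁)
        (normalizedHS_norm_eq_one_of_mem_unitaryGroup h₂)
        (normalizedHS_norm_eq_one_of_mem_unitaryGroup h₃)

end Matrix

/-- D satisfies the triangle inequality on unitaries. -/
theorem pdist_triangle {d : ℕ} (U₁ U₂ U₃ : Matrix (Fin d) (Fin d) ℂ)
    (h₁ : U₁ ∈ Matrix.unitaryGroup (Fin d) ℂ)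
    (h₂ : U₂ ∈ Matrix.unitaryGroup (Fin d) ℂ)
    (h₃ : U₃ ∈ Matrix.unitaryGroup (Fin d) ℂ) :
    pDist U₁ U₃ ≤ pDist U₁ U₂ + pDist U₂ U₃ := by
  simpa [pDist] using sqrt_one_sub_norm_trace_sq_triangle h₁ h₂ h₃
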